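/- arXiv:math/0306372 — 2 statements merged into one kernel-verified Lean document; each statement's English description precedes it below -/
import Mathlib

section
/- Let P be the set of matrix polynomials Σ_{i ≥ 0} B_i h^i in M_{s+1}(ℂ)[h] such that B_0 − I is 2-triangular and B_i is (i+2)-triangular for every i ≥ 1. Then P is closed under multiplication, every element of P is a unit of the ring M_{s+1}(ℂ)[h], and its inverse again lies in P; that is, P is a subgroup of the group of units of M_{s+1}(ℂ)[h]. -/
/-- The block index type: pairs (α, i) with `α : Fin (m+1)` a block index and
`i : Fin (s α)` a position within the block. -/
abbrev BlockIdx (m : ℕ) (s : Fin (m + 1) → ℕ) := Σ α : Fin (m + 1), Fin (s α)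

/-- `A` is `l`-triangular if the block `A_{α,β}` vanishes whenever `β < α + l`. -/
def IsTriangular {R : Type*} [Zero R] {m : ℕ} {s : Fin (m + 1) → ℕ} (l : ℤ)
    (A : Matrix (BlockIdx m s) (BlockIdx m s) R) : Prop :=
  ∀ i j : BlockIdx m s, ((j.1 : ℤ) < (i.1 : ℤ) + l) → A i j = 0

/-- The set `P` of matrix polynomials `∑_{i ≥ 0} Bᵢ hⁱ` in `M_{s+1}(ℂ)[h]` such that
`B₀ - I` is `2`-triangular and `Bᵢ` is `(i+2)`-triangular for every `i ≥ 1`. -/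
def TriangularPolySet (m : ℕ) (s : Fin (m + 1) → ℕ) :
    Set (Polynomial (Matrix (BlockIdx m s) (BlockIdx m s) ℂ)) :=
  {p | IsTriangular 2 (p.coeff 0 - 1) ∧
       ∀ i : ℕ, 1 ≤ i → IsTriangular ((i : ℤ) + 2) (p.coeff i)}

section Aux

variable {m : ℕ} {s : Fin (m + 1) → ℕ}

local notation "Mtx" => Matrix (BlockIdx m s) (BlockIdx m s) ℂ

lemma tri_mono {l l' : ℤ} (h : l' ≤ l) {A : Mtx} (hA : IsTriangular l A) :
    IsTriangular l' A := fun i j hij => hA i j (by omega)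

lemma tri_zero (l : ℤ) : IsTriangular l (0 : Mtx) := fun _ _ _ => rfl

lemma tri_add {l : ℤ} {A B : Mtx} (hA : IsTriangular l A) (hB : IsTriangular l B) :
    IsTriangular l (A + B) := fun i j h => by
  simp [Matrix.add_apply, hA i j h, hB i j h]

lemma tri_neg {l : ℤ} {A : Mtx} (hA : IsTriangular l A) : IsTriangular l (-A) :=
  fun i j h => by simp [hA i j h]

lemma tri_sum {ι : Type*} (t : Finset ι) (f : ι → Mtx) (l : ℤ)
    (h : ∀ x ∈ t, IsTriangular l (f x)) : IsTriangular l (∑ x ∈ t, f x) := by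
  intro i j hij
  rw [Matrix.sum_apply]
  exact Finset.sum_eq_zero fun x hx => h x hx i j hij

lemma tri_one : IsTriangular 0 (1 : Mtx) := by
  intro i j hij
  apply Matrix.one_apply_ne
  rintro rfl
  omega

lemma tri_mul {l l' : ℤ} {A B : Mtx} (hA : IsTriangular l A) (hB : IsTriangular l' B) :
    IsTriangular (l + l') (A * B) := by
  intro i j hij
  rw [Matrix.mul_apply]
  apply Finset.sum_eq_zero
  intro k _
  by_cases hk : (k.1 : ℤ) < (i.1 : ℤ) + l
  · rw [hA i k hk, zero_mul]
  · rw [hB k j (by omega), mul_zero]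

lemma tri_high {l : ℤ} (hl : (m : ℤ) < l) {A : Mtx} (hA : IsTriangular l A) : A = 0 := by
  ext i j
  have hj : (j.1 : ℕ) ≤ m := Nat.lt_succ_iff.mp j.1.isLt
  exact hA i j (by have : (0:ℤ) ≤ (i.1 : ℤ) := Int.natCast_nonneg _; push_cast; omega)

/-- Polynomials all of whose coefficients `Bᵢ` are `(i + t)`-triangular. -/
def Ntri (t : ℤ) : Set (Polynomial Mtx) :=
  {n | ∀ i : ℕ, IsTriangular ((i : ℤ) + t) (n.coeff i)}

lemma Ntri_mono {t t' : ℤ} (h : t' ≤ t) {n : Polynomial Mtx} (hn : n ∈ Ntri t) :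
    n ∈ Ntri t' := fun i => tri_mono (by omega) (hn i)

lemma Ntri_add {t : ℤ} {a b : Polynomial Mtx} (ha : a ∈ Ntri t) (hb : b ∈ Ntri t) :
    a + b ∈ Ntri t := fun i => by
  rw [Polynomial.coeff_add]; exact tri_add (ha i) (hb i)

lemma Ntri_neg {t : ℤ} {a : Polynomial Mtx} (ha : a ∈ Ntri t) : -a ∈ Ntri t := fun i => by
  rw [Polynomial.coeff_neg]; exact tri_neg (ha i)

lemma Ntri_one : (1 : Polynomial Mtx) ∈ Ntri 0 := by
  intro i
  rcases Nat.eq_zero_or_pos i with rfl | hi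
  · simpa using tri_one
  · rw [Polynomial.coeff_one, if_neg (by omega)]
    exact tri_zero _

lemma Ntri_mul {t t' : ℤ} {a b : Polynomial Mtx} (ha : a ∈ Ntri t) (hb : b ∈ Ntri t') :
    a * b ∈ Ntri (t + t') := by
  intro k
  rw [Polynomial.coeff_mul]
  apply tri_sum
  intro x hx
  have hxk : x.1 + x.2 = k := Finset.HasAntidiagonal.mem_antidiagonal.mp hx
  have := tri_mul (ha x.1) (hb x.2)
  apply tri_mono _ this
  push_cast [← hxk]
  omega

lemma Ntri_sum {t : ℤ} {ι : Type*} (u : Finset ι) (f : ι → Polynomial Mtx)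
    (h : ∀ x ∈ u, f x ∈ Ntri t) : (∑ x ∈ u, f x) ∈ Ntri t := by
  intro i
  rw [Polynomial.finset_sum_coeff]
  exact tri_sum _ _ _ fun x hx => h x hx i

lemma Ntri_pow {a : Polynomial Mtx} (ha : a ∈ Ntri 2) :
    ∀ k : ℕ, a ^ (k + 1) ∈ Ntri (2 * (k + 1)) := by
  intro k
  induction k with
  | zero => simpa using ha
  | succ k ih =>
      have := Ntri_mul ih ha
      rw [← pow_succ] at this
      apply Ntri_mono _ this
      push_cast; omega

lemma Ntri_nilpotent {a : Polynomial Mtx} (ha : a ∈ Ntri 2) : a ^ (m + 1) = 0 := by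
  have h := Ntri_pow ha m
  ext k i j
  rw [Polynomial.coeff_zero]
  have : (a ^ (m + 1)).coeff k = 0 :=
    tri_high (by push_cast; omega) (h k)
  simp [this]

lemma memP_iff (p : Polynomial Mtx) :
    p ∈ TriangularPolySet m s ↔ (p - 1) ∈ Ntri 2 := by
  constructor
  · rintro ⟨h0, hi⟩ i
    cases i with
    | zero =>
        simpa [Polynomial.coeff_sub] using h0
    | succ k =>
        have := hi (k + 1) (by omega)
        rw [Polynomial.coeff_sub, Polynomial.coeff_one, if_neg (by omega), sub_zero]
        exact this
  · intro h
    constructor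
    · simpa [Polynomial.coeff_sub] using h 0
    · intro i hi
      have := h i
      rwa [Polynomial.coeff_sub, Polynomial.coeff_one, if_neg (by omega), sub_zero] at this

end Aux

/-- `P` is closed under multiplication, every element of `P` is a unit of the ring
`M_{s+1}(ℂ)[h]`, and its inverse again lies in `P`; that is, `P` is a subgroup of the
group of units of `M_{s+1}(ℂ)[h]`. -/
theorem triangularPolySet_subgroup {m : ℕ} {s : Fin (m + 1) → ℕ}
    (hs : ∀ α, 1 ≤ s α) :
    (∀ p ∈ TriangularPolySet m s, ∀ q ∈ TriangularPolySet m s,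
        p * q ∈ TriangularPolySet m s) ∧
    (∀ p ∈ TriangularPolySet m s,
        IsUnit p ∧ ∃ q ∈ TriangularPolySet m s, p * q = 1 ∧ q * p = 1) := by
  constructor
  · -- closure under multiplication
    intro p hp q hq
    rw [memP_iff] at hp hq ⊢
    have key : p * q - 1 = (p - 1) * (q - 1) + ((p - 1) + (q - 1)) := by
      simp only [mul_sub, sub_mul, mul_one, one_mul]
      abel
    rw [key]
    exact Ntri_add (Ntri_mono (by omega) (Ntri_mul hp hq)) (Ntri_add hp hq)
  · -- inverses
    intro p hp
    rw [memP_iff] at hp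
    set x : Polynomial (Matrix (BlockIdx m s) (BlockIdx m s) ℂ) := -(p - 1) with hx
    have hxN : x ∈ Ntri 2 := Ntri_neg hp
    have hxnil : x ^ (m + 1) = 0 := Ntri_nilpotent hxN
    have hpx : p = 1 - x := by rw [hx, sub_neg_eq_add]; abel
    set q : Polynomial (Matrix (BlockIdx m s) (BlockIdx m s) ℂ) :=
      ∑ j ∈ Finset.range (m + 1), x ^ j with hq
    have hpq : p * q = 1 := by
      have := mul_geom_sum x (m + 1)
      rw [hxnil] at this
      calc p * q = -((x - 1) * q) := by rw [hpx]; simp only [sub_mul, one_mul, neg_sub]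
        _ = -(0 - 1) := by rw [hq, this]
        _ = 1 := by rw [zero_sub, neg_neg]
    have hqp : q * p = 1 := by
      have := geom_sum_mul x (m + 1)
      rw [hxnil] at this
      calc q * p = -(q * (x - 1)) := by rw [hpx]; simp only [mul_sub, mul_one, neg_sub]
        _ = -(0 - 1) := by rw [hq, this]
        _ = 1 := by rw [zero_sub, neg_neg]
    have hqP : q ∈ TriangularPolySet m s := by
      rw [memP_iff]
      have hq1 : q - 1 = x * ∑ j ∈ Finset.range m, x ^ j := by
        rw [hq, geom_sum_succ, add_sub_cancel_right]
      rw [hq1]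
      have hpow0 : ∀ j : ℕ, x ^ j ∈ Ntri 0 := by
        intro j
        induction j with
        | zero => simpa using Ntri_one
        | succ k ih =>
            have h2 := Ntri_mul ih hxN
            rw [← pow_succ] at h2
            exact Ntri_mono (by omega) h2
      have hg : (∑ j ∈ Finset.range m, x ^ j) ∈ Ntri 0 :=
        Ntri_sum _ _ fun j _ => hpow0 j
      have := Ntri_mul hxN hg
      simpa using this
    exact ⟨⟨⟨p, q, hpq, hqp⟩, rfl⟩, q, hqP, hpq, hqp⟩
end

section
/- Let 𝓡_1 = b_1^2 + b_2^2 − b_1 b_2 − q_1 − q_2 and 𝓡_2 = b_1 b_2^2 − b_1^2 b_2 + q_1 b_2 − q_2 b_1 in ℂ[b_1, b_2, q_1, q_2]. Then the quotient ring A = ℂ[b_1, b_2, q_1, q_2]/(𝓡_1, 𝓡_2) is a free module over ℂ[q_1, q_2] of rank 6, with basis the classes of the monomials 1, b_2, b_1, b_2^2, b_2 b_1, b_2^2 b_1. -/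
open MvPolynomial

noncomputable section

/-- The polynomial ring `ℂ[b₁, b₂, q₁, q₂]`, with `b₁ = X 0`, `b₂ = X 1`,
`q₁ = X 2`, `q₂ = X 3`. -/
abbrev R4 : Type := MvPolynomial (Fin 4) ℂ

/-- `𝓡₁ = b₁² + b₂² - b₁b₂ - q₁ - q₂`. -/
def Rel1 : R4 := X 0 ^ 2 + X 1 ^ 2 - X 0 * X 1 - X 2 - X 3

/-- `𝓡₂ = b₁b₂² - b₁²b₂ + q₁b₂ - q₂b₁`. -/
def Rel2 : R4 := X 0 * X 1 ^ 2 - X 0 ^ 2 * X 1 + X 2 * X 1 - X 3 * X 0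

/-- The quantum cohomology ring `A = ℂ[b₁, b₂, q₁, q₂]/(𝓡₁, 𝓡₂)` of the full flag
manifold of `GL₃(ℂ)`. -/
abbrev QH3 : Type := R4 ⧸ Ideal.span {Rel1, Rel2}

/-- The quotient map `ℂ[b₁, b₂, q₁, q₂] → A`. -/
def mk3 : R4 →+* QH3 := Ideal.Quotient.mk _

/-- The coefficient ring `ℂ[q₁, q₂]` (with `q₁ = X 0`, `q₂ = X 1`). -/
abbrev S2 : Type := MvPolynomial (Fin 2) ℂ

/-- The natural map `ℂ[q₁, q₂] → A`, sending `q₁, q₂` to the classes of `q₁, q₂`. -/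
def structMap : S2 →+* QH3 :=
  MvPolynomial.eval₂Hom (mk3.comp MvPolynomial.C) ![mk3 (X 2), mk3 (X 3)]

/-- `A` is a `ℂ[q₁, q₂]`-module via the natural map `ℂ[q₁, q₂] → A`. -/
instance : Module S2 QH3 := Module.compHom _ structMap

/-- The classes of the monomials `1, b₂, b₁, b₂², b₂b₁, b₂²b₁` in `A`. -/
def monBasis : Fin 6 → QH3 :=
  ![mk3 1, mk3 (X 1), mk3 (X 0), mk3 (X 1 ^ 2), mk3 (X 1 * X 0), mk3 (X 1 ^ 2 * X 0)]

/-!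
The proof writes down the regular representation of `A` explicitly. Over `ℂ[q₁, q₂]`, let `B₁`,
`B₂` be the matrices of multiplication by `b₁`, `b₂` in the monomial basis. They commute and
satisfy `𝓡₁` and `𝓡₂`, so `bᵢ ↦ Bᵢ` induces a `ℂ[q₁, q₂]`-linear ring map `A → M₆(ℂ[q₁, q₂])`;
evaluated on the first standard vector it sends the `j`-th monomial to the `j`-th standard
vector, so the monomials are linearly independent. Conversely, modulo `𝓡₁, 𝓡₂`, multiplying a
combination `∑ cⱼ mⱼ` of the monomials by `bᵢ` gives the combination with coefficients `Bᵢ c`, so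
the span of the monomials is an ideal containing `1`.
-/

open scoped Matrix

section CommutingEval

variable {R A σ : Type*} [CommRing R] [Ring A] [Algebra R A]

open scoped IsMulCommutative in
def aevalOfCommute (x : σ → A) (hx : ∀ i j, Commute (x i) (x j)) :
    MvPolynomial σ R →ₐ[R] A :=
  have := Algebra.isMulCommutative_adjoin R (s := Set.range x) (by
    rintro _ ⟨i, rfl⟩ _ ⟨j, rfl⟩
    exact hx i j)
  (Algebra.adjoin R (Set.range x)).val.comp
    (aeval fun i => ⟨x i, Algebra.subset_adjoin ⟨i, rfl⟩⟩)

@[simp]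
theorem aevalOfCommute_X (x : σ → A) (hx : ∀ i j, Commute (x i) (x j)) (i : σ) :
    aevalOfCommute (R := R) x hx (X i) = x i := by
  simp [aevalOfCommute]

end CommutingEval

theorem Matrix.algebraMap_mulVec {n R : Type*} [Fintype n] [DecidableEq n] [CommSemiring R]
    (s : R) (c : n → R) : algebraMap R (Matrix n n R) s *ᵥ c = s • c := by
  rw [Algebra.algebraMap_eq_smul_one, Matrix.smul_mulVec, Matrix.one_mulVec]

local notation "q₁" => (X 0 : S2)
local notation "q₂" => (X 1 : S2)

/- The `j`-th column of `b1Matrix` (resp. `b2Matrix`) holds the coordinates of `b₁ · monBasis j`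
(resp. `b₂ · monBasis j`) reduced modulo `𝓡₁, 𝓡₂`. -/
def b1Matrix : Matrix (Fin 6) (Fin 6) S2 :=
  !![0, 0, q₁ + q₂, 0, 0, q₁ * q₂ + q₂ ^ 2;
     0, 0, 0, 0, q₁, 0;
     1, 0, 0, 0, -q₂, 0;
     0, 0, -1, 0, 0, q₁ - q₂;
     0, 1, 1, 0, 0, q₂;
     0, 0, 0, 1, 1, 0]

def b2Matrix : Matrix (Fin 6) (Fin 6) S2 :=
  !![0, 0, 0, 0, 0, q₁ * q₂ + q₂ ^ 2;
     1, 0, 0, q₂, 0, 0;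
     0, 0, 0, q₂, 0, 0;
     0, 1, 0, 0, 0, -q₂;
     0, 0, 1, 0, 0, 2 * q₂;
     0, 0, 0, 0, 1, 0]

theorem b1Matrix_mulVec (c : Fin 6 → S2) :
    b1Matrix *ᵥ c = ![(q₁ + q₂) * c 2 + (q₁ * q₂ + q₂ ^ 2) * c 5, q₁ * c 4, c 0 - q₂ * c 4,
      -c 2 + (q₁ - q₂) * c 5, c 1 + c 2 + q₂ * c 5, c 3 + c 4] := by
  funext i
  fin_cases i <;> simp [b1Matrix, Matrix.mulVec, dotProduct, Fin.sum_univ_six, ← sub_eq_add_neg]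

theorem b2Matrix_mulVec (c : Fin 6 → S2) :
    b2Matrix *ᵥ c = ![(q₁ * q₂ + q₂ ^ 2) * c 5, c 0 + q₂ * c 3, q₂ * c 3, c 1 - q₂ * c 5,
      c 2 + 2 * q₂ * c 5, c 4] := by
  funext i
  fin_cases i <;> simp [b2Matrix, Matrix.mulVec, dotProduct, Fin.sum_univ_six, ← sub_eq_add_neg]

theorem commute_b1Matrix_b2Matrix : Commute b1Matrix b2Matrix := by
  refine Matrix.ext_iff_mulVec.mpr fun c => ?_
  simp only [← Matrix.mulVec_mulVec, b1Matrix_mulVec, b2Matrix_mulVec]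
  funext i
  fin_cases i <;> simp <;> ring

def multMatrix : Fin 4 → Matrix (Fin 6) (Fin 6) S2 :=
  ![b1Matrix, b2Matrix, algebraMap S2 _ q₁, algebraMap S2 _ q₂]

theorem multMatrix_commute (i j : Fin 4) : Commute (multMatrix i) (multMatrix j) := by
  fin_cases i <;> fin_cases j <;>
    simp [multMatrix, commute_b1Matrix_b2Matrix, commute_b1Matrix_b2Matrix.symm,
      Algebra.commute_algebraMap_left, Algebra.commute_algebraMap_right]

def regularRep : R4 →ₐ[ℂ] Matrix (Fin 6) (Fin 6) S2 :=
  aevalOfCommute multMatrix multMatrix_commute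

theorem regularRep_rel {r : R4} (hr : r = Rel1 ∨ r = Rel2) : regularRep r = 0 := by
  refine Matrix.ext_iff_mulVec.mpr fun c => ?_
  obtain rfl | rfl := hr <;>
    simp only [Rel1, Rel2, regularRep, map_sub, map_add, map_mul, aevalOfCommute_X, pow_two,
      Matrix.sub_mulVec, Matrix.add_mulVec, ← Matrix.mulVec_mulVec, Matrix.zero_mulVec,
      multMatrix, Matrix.cons_val, Matrix.algebraMap_mulVec, b1Matrix_mulVec,
      b2Matrix_mulVec] <;>
    funext i <;> fin_cases i <;> simp [Matrix.vecHead, Matrix.vecTail] <;> ring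

def qh3Rep : QH3 →+* Matrix (Fin 6) (Fin 6) S2 :=
  Ideal.Quotient.lift _ regularRep.toRingHom fun a ha => by
    obtain ⟨u, v, rfl⟩ := Ideal.mem_span_pair.mp ha
    simp [regularRep_rel]

theorem qh3Rep_comp_structMap : qh3Rep.comp structMap = algebraMap S2 _ := by
  apply MvPolynomial.ringHom_ext
  · intro a
    simp [structMap, qh3Rep, mk3,
      IsScalarTower.algebraMap_apply ℂ S2 (Matrix (Fin 6) (Fin 6) S2)]
  · intro i
    fin_cases i <;> simp [structMap, qh3Rep, mk3, regularRep, multMatrix]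

def firstColumn : QH3 →ₗ[S2] Fin 6 → S2 where
  toFun x := qh3Rep x *ᵥ Pi.single 0 1
  map_add' x y := by rw [map_add, Matrix.add_mulVec]
  map_smul' s x := by
    change qh3Rep (structMap s * x) *ᵥ _ = s • _
    rw [map_mul, ← RingHom.comp_apply, qh3Rep_comp_structMap, ← Matrix.mulVec_mulVec,
      Matrix.algebraMap_mulVec]

theorem firstColumn_mk3 (p : R4) : firstColumn (mk3 p) = regularRep p *ᵥ Pi.single 0 1 := rfl

theorem firstColumn_monBasis (j : Fin 6) : firstColumn (monBasis j) = Pi.single j 1 := by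
  fin_cases j <;> refine (firstColumn_mk3 _).trans ?_ <;>
    simp only [regularRep, map_one, map_mul, pow_two, aevalOfCommute_X, ← Matrix.mulVec_mulVec,
      Matrix.one_mulVec, multMatrix, Matrix.cons_val, b1Matrix_mulVec, b2Matrix_mulVec] <;>
    funext i <;> fin_cases i <;> simp

theorem linearIndependent_monBasis : LinearIndependent S2 monBasis := by
  apply LinearIndependent.of_comp firstColumn
  convert (Pi.basisFun S2 (Fin 6)).linearIndependent
  funext j
  simp [firstColumn_monBasis]

-- Synthesizing `SMul S2 QH3` exceeds the default instance-search budget.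
set_option synthInstance.maxHeartbeats 200000 in
theorem smul_eq_structMap_mul (s : S2) (x : QH3) : s • x = structMap s * x := rfl

@[simp] theorem structMap_C (a : ℂ) : structMap (C a) = mk3 (C a) := by simp [structMap]
@[simp] theorem structMap_X_zero : structMap q₁ = mk3 (X 2) := by simp [structMap]
@[simp] theorem structMap_X_one : structMap q₂ = mk3 (X 3) := by simp [structMap]

theorem mk3_rel1 :
    mk3 (X 0) ^ 2 + mk3 (X 1) ^ 2 - mk3 (X 0) * mk3 (X 1) - mk3 (X 2) - mk3 (X 3) = 0 := by
  have h : mk3 Rel1 = 0 := Ideal.Quotient.eq_zero_iff_mem.mpr (Ideal.subset_span (by simp))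
  simpa only [Rel1, map_sub, map_add, map_mul, map_pow] using h

theorem mk3_rel2 : mk3 (X 0) * mk3 (X 1) ^ 2 - mk3 (X 0) ^ 2 * mk3 (X 1) + mk3 (X 2) * mk3 (X 1)
    - mk3 (X 3) * mk3 (X 0) = 0 := by
  have h : mk3 Rel2 = 0 := Ideal.Quotient.eq_zero_iff_mem.mpr (Ideal.subset_span (by simp))
  simpa only [Rel2, map_sub, map_add, map_mul, map_pow] using h

theorem mk3_X_zero_mul_linearCombination (c : Fin 6 → S2) :
    mk3 (X 0) * Fintype.linearCombination S2 monBasis c =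
      Fintype.linearCombination S2 monBasis (b1Matrix *ᵥ c) := by
  simp [Fintype.linearCombination_apply, Fin.sum_univ_six, smul_eq_structMap_mul,
    b1Matrix_mulVec, monBasis]
  linear_combination
    (structMap (c 2) + structMap (c 5) * (mk3 (X 0) * mk3 (X 1) + mk3 (X 3))) * mk3_rel1
      + (structMap (c 5) * (mk3 (X 0) - mk3 (X 1)) - structMap (c 4)) * mk3_rel2

theorem mk3_X_one_mul_linearCombination (c : Fin 6 → S2) :
    mk3 (X 1) * Fintype.linearCombination S2 monBasis c =
      Fintype.linearCombination S2 monBasis (b2Matrix *ᵥ c) := by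
  simp [Fintype.linearCombination_apply, Fin.sum_univ_six, smul_eq_structMap_mul,
    b2Matrix_mulVec, monBasis, map_ofNat]
  linear_combination
    (structMap (c 3) * mk3 (X 1) + structMap (c 5) * (mk3 (X 0) * mk3 (X 1) + mk3 (X 3)))
        * mk3_rel1
      + (structMap (c 3) + structMap (c 5) * mk3 (X 0)) * mk3_rel2

set_option synthInstance.maxHeartbeats 200000 in
theorem structMap_mul_linearCombination (s : S2) (c : Fin 6 → S2) :
    structMap s * Fintype.linearCombination S2 monBasis c =
      Fintype.linearCombination S2 monBasis (algebraMap S2 _ s *ᵥ c) := by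
  rw [Matrix.algebraMap_mulVec, map_smul, smul_eq_structMap_mul]

theorem mk3_X_mul_linearCombination (i : Fin 4) (c : Fin 6 → S2) :
    mk3 (X i) * Fintype.linearCombination S2 monBasis c =
      Fintype.linearCombination S2 monBasis (multMatrix i *ᵥ c) :=
  match i with
  | 0 => mk3_X_zero_mul_linearCombination c
  | 1 => mk3_X_one_mul_linearCombination c
  | 2 => structMap_X_zero ▸ structMap_mul_linearCombination q₁ c
  | 3 => structMap_X_one ▸ structMap_mul_linearCombination q₂ c

theorem span_monBasis_eq_top : Submodule.span S2 (Set.range monBasis) = ⊤ := by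
  rw [← Fintype.range_linearCombination, LinearMap.range_eq_top]
  intro x
  obtain ⟨p, rfl⟩ := Ideal.Quotient.mk_surjective x
  change ∃ c, _ = mk3 p
  induction p using MvPolynomial.induction_on with
  | C a =>
    refine ⟨algebraMap S2 (Matrix (Fin 6) (Fin 6) S2) (C a) *ᵥ Pi.single 0 1, ?_⟩
    rw [← structMap_mul_linearCombination, Fintype.linearCombination_apply_single, one_smul,
      structMap_C, monBasis, Matrix.cons_val_zero, ← map_mul, mul_one]
  | add p q hp hq =>
    obtain ⟨c, hc⟩ := hp
    obtain ⟨d, hd⟩ := hq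
    exact ⟨c + d, by rw [map_add, hc, hd, map_add]⟩
  | mul_X p i hp =>
    obtain ⟨c, hc⟩ := hp
    refine ⟨multMatrix i *ᵥ c, ?_⟩
    rw [← mk3_X_mul_linearCombination, hc, map_mul, mul_comm]

/-- `A = ℂ[b₁, b₂, q₁, q₂]/(𝓡₁, 𝓡₂)` is a free `ℂ[q₁, q₂]`-module of rank `6`, with
basis the classes of the monomials `1, b₂, b₁, b₂², b₂b₁, b₂²b₁`. -/
theorem qh3_free_rank_six : ∃ b : Module.Basis (Fin 6) S2 QH3, ⇑b = monBasis :=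
  ⟨.mk linearIndependent_monBasis span_monBasis_eq_top.ge, Module.Basis.coe_mk _ _⟩

end
end
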